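/- arXiv:1301.2665 — 6 statements merged into one kernel-verified Lean document; each statement's English description precedes it below -/
import Mathlib

section
/- A vertex v of a finite simple graph G is simplicial (every two neighbors of v are adjacent) if and only if v is a simplicial vertex of the clutter C_k(G) for every k with 2 ≤ k ≤ |V(G)|, where C_k(G) is the clutter whose edges are the k-element vertex subsets inducing a connected subgraph, and v is simplicial in a clutter C if for any two distinct edges e, f containing v there is an edge g with g ⊆ (e ∪ f) \ {v}. -/
/-!
If `v` is simplicial in `G`, a walk through `v` can skip it via the edge between the two
neighbours of `v` it uses, so deleting `v` from a connected vertex set keeps it connected. For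
distinct connected `k`-sets `e, f ∋ v`, the sets `e \ {v}` and `f \ {v}` are then connected and
contain neighbours of `v`, which coincide or are adjacent, so `(e ∪ f) \ {v}` is connected; it has
at least `k` vertices because `f ⊄ e`, and a connected set contains connected subsets of every
smaller size (grow one vertex at a time along a boundary edge). Conversely, applying clutter
simpliciality to the edges `{v, u}, {v, w}` of `C₂(G)` forces `{u, w}` to be an edge of `C₂(G)`.
-/

/-- A vertex of a simple graph is simplicial if any two of its neighbors are adjacent. -/
def GraphSimplicial {V : Type} (G : SimpleGraph V) (v : V) : Prop :=
  ∀ u w : V, G.Adj v u → G.Adj v w → u ≠ w → G.Adj u w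

/-- A vertex `v` of a clutter (given by its edge predicate `Ed`) is simplicial if for any two
distinct edges `e, f` containing `v` there is an edge `g ⊆ (e ∪ f) \ {v}`. -/
def ClutterSimplicial {V : Type} [DecidableEq V] (Ed : Finset V → Prop) (v : V) : Prop :=
  ∀ e f : Finset V, Ed e → Ed f → e ≠ f → v ∈ e → v ∈ f →
    ∃ g : Finset V, Ed g ∧ g ⊆ (e ∪ f).erase v

/-- The edge predicate of the clutter `C_k(G)`: the `k`-element vertex subsets inducing a
connected subgraph. -/
def CkEdge {n : ℕ} (G : SimpleGraph (Fin n)) (k : ℕ) (A : Finset (Fin n)) : Prop :=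
  A.card = k ∧ (G.induce (A : Set (Fin n))).Connected

namespace SimpleGraph

section Induce

variable {V : Type*} {G : SimpleGraph V}

lemma reachable_induce_iff {s : Set V} {x y : s} :
    (G.induce s).Reachable x y ↔ ∃ p : G.Walk x y, ∀ z ∈ p.support, z ∈ s := by
  constructor
  · rintro ⟨p⟩
    refine ⟨p.map (Embedding.induce s).toHom, fun z hz => ?_⟩
    replace hz : z ∈ (p.map (Embedding.induce s).toHom).support := hz
    rw [Walk.support_map, List.mem_map] at hz
    obtain ⟨z', -, rfl⟩ := hz
    exact z'.2
  · rintro ⟨p, hp⟩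
    exact ⟨p.induce s hp⟩

lemma exists_adj_inter_diff_of_preconnected_induce {s t : Set V}
    (hs : (G.induce s).Preconnected) {a b : V} (ha : a ∈ s ∩ t) (hb : b ∈ s \ t) :
    ∃ x ∈ s ∩ t, ∃ y ∈ s \ t, G.Adj x y := by
  obtain ⟨p⟩ := hs ⟨a, ha.1⟩ ⟨b, hb.1⟩
  obtain ⟨d, -, hd₁, hd₂⟩ := p.exists_boundary_dart (Subtype.val ⁻¹' t) ha.2 hb.2
  exact ⟨d.fst, ⟨d.fst.2, hd₁⟩, d.snd, ⟨d.snd.2, hd₂⟩, d.adj⟩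

lemma connected_induce_pair_iff {u w : V} (huw : u ≠ w) :
    (G.induce {u, w}).Connected ↔ G.Adj u w := by
  refine ⟨fun h => ?_, induce_pair_connected_of_adj⟩
  obtain ⟨x, ⟨-, hxu⟩, y, ⟨hy, hyu⟩, hxy⟩ := exists_adj_inter_diff_of_preconnected_induce
    (t := {u}) h.preconnected ⟨by simp, rfl⟩ ⟨by simp, huw.symm⟩
  obtain rfl : x = u := hxu
  exact (hy.resolve_left hyu : y = w) ▸ hxy

lemma connected_induce_insert {s : Set V} (hs : (G.induce s).Connected) {a b : V}
    (ha : a ∈ s) (hab : G.Adj a b) : (G.induce (insert b s)).Connected := by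
  rw [← Set.union_singleton]
  exact connected_induce_union hs.preconnected (by simp [Preconnected.of_subsingleton]) ha rfl hab

lemma exists_connected_induce_subset_card {s : Finset V} (hs : (G.induce (s : Set V)).Connected)
    {j : ℕ} (hj : 1 ≤ j) (hjs : j ≤ s.card) :
    ∃ t ⊆ s, t.card = j ∧ (G.induce (t : Set V)).Connected := by
  classical
  induction j, hj using Nat.le_induction with
  | base =>
    obtain ⟨a, ha⟩ := Finset.card_pos.1 hjs
    exact ⟨{a}, by simpa, Finset.card_singleton a, by
      rw [Finset.coe_singleton, connected_iff]
      exact ⟨.of_subsingleton, ⟨⟨a, rfl⟩⟩⟩⟩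
  | succ j hj ih =>
    obtain ⟨t, hts, rfl, ht⟩ := ih (by omega)
    obtain ⟨a, ⟨-, hat⟩, b, ⟨hbs, hbt⟩, hab⟩ : ∃ a ∈ (s : Set V) ∩ t, ∃ b ∈ (s : Set V) \ t,
        G.Adj a b := by
      obtain ⟨a, ha⟩ := Finset.card_pos.1 hj
      obtain ⟨b, hb⟩ := Finset.exists_mem_notMem_of_card_lt_card (by omega : t.card < s.card)
      exact exists_adj_inter_diff_of_preconnected_induce hs.preconnected ⟨hts ha, ha⟩ hb
    refine ⟨insert b t, Finset.insert_subset hbs hts, Finset.card_insert_of_notMem hbt, ?_⟩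
    rw [Finset.coe_insert]
    exact connected_induce_insert ht hat hab

end Induce

end SimpleGraph

open SimpleGraph

lemma Finset.card_le_card_erase_union {α : Type*} [DecidableEq α] {e f : Finset α} {v : α}
    (hv : v ∈ e) (hfe : ¬f ⊆ e) : e.card ≤ ((e ∪ f).erase v).card := by
  have : e.card < (e ∪ f).card := Finset.card_lt_card <| Finset.ssubset_iff_subset_ne.2
    ⟨Finset.subset_union_left, fun h => hfe (h ▸ Finset.subset_union_right)⟩
  rw [Finset.card_erase_of_mem (Finset.mem_union_left f hv)]
  omega

section Simplicial

variable {V : Type} {G : SimpleGraph V} {v : V}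

/-- Only the tail of the support avoids `v`, so that the induction also covers walks starting
at `v`. -/
lemma GraphSimplicial.exists_walk_support_subset_notMem_tail (hv : GraphSimplicial G v)
    {x y : V} (p : G.Walk x y) (hy : y ≠ v) :
    ∃ q : G.Walk x y, q.support ⊆ p.support ∧ v ∉ q.support.tail := by
  induction p with
  | nil => exact ⟨.nil, by simp⟩
  | @cons x b y hxb p ih =>
    obtain ⟨q, hqp, hvq⟩ := ih hy
    by_cases hb : b = v
    · subst hb
      cases q with
      | nil => exact absurd rfl hy
      | @cons _ c _ hbc q =>
        simp only [Walk.support_cons, List.tail_cons] at hqp hvq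
        have hq : q.support ⊆ (Walk.cons hxb p).support := fun z hz => by
          simpa using Or.inr (hqp (List.mem_cons_of_mem _ hz))
        by_cases hxc : x = c
        · subst hxc
          exact ⟨q, hq, fun h => hvq (List.mem_of_mem_tail h)⟩
        · refine ⟨.cons (hv x c hxb.symm hbc hxc) q, ?_, by simpa using hvq⟩
          simpa [List.cons_subset] using hq
    · refine ⟨.cons hxb q, ?_, ?_⟩
      · simpa only [Walk.support_cons] using List.cons_subset_cons x hqp
      · rw [Walk.support_cons, List.tail_cons, ← Walk.cons_tail_support, List.mem_cons]
        exact not_or.2 ⟨Ne.symm hb, hvq⟩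

lemma GraphSimplicial.connected_induce_diff_singleton (hv : GraphSimplicial G v) {s : Set V}
    (hs : (G.induce s).Connected) (hne : (s \ {v}).Nonempty) :
    (G.induce (s \ {v})).Connected := by
  rw [connected_iff]
  refine ⟨?_, hne.to_subtype⟩
  rintro ⟨x, hxs, hxv⟩ ⟨y, hys, hyv⟩
  obtain ⟨p, hp⟩ := reachable_induce_iff.1 (hs.preconnected ⟨x, hxs⟩ ⟨y, hys⟩)
  obtain ⟨q, hqp, hvq⟩ := hv.exists_walk_support_subset_notMem_tail p hyv
  refine reachable_induce_iff.2 ⟨q, fun z hz => ⟨hp z (hqp hz), ?_⟩⟩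
  rintro rfl
  rw [← Walk.cons_tail_support, List.mem_cons] at hz
  exact hz.elim (fun h => hxv h.symm) hvq

lemma GraphSimplicial.connected_induce_union_diff_singleton (hv : GraphSimplicial G v)
    {s t : Set V} (hs : (G.induce s).Connected) (ht : (G.induce t).Connected) (hvs : v ∈ s)
    (hvt : v ∈ t) (hs' : (s \ {v}).Nonempty) (ht' : (t \ {v}).Nonempty) :
    (G.induce ((s ∪ t) \ {v})).Connected := by
  have neighbor_mem {r : Set V} (hr : (G.induce r).Connected) (hvr : v ∈ r)
      (hr' : (r \ {v}).Nonempty) : ∃ a ∈ r \ {v}, G.Adj v a := by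
    obtain ⟨x, ⟨-, rfl⟩, a, ha, hxa⟩ :=
      exists_adj_inter_diff_of_preconnected_induce hr.preconnected
        ⟨hvr, Set.mem_singleton v⟩ hr'.some_mem
    exact ⟨a, ha, hxa⟩
  obtain ⟨a, ha, hva⟩ := neighbor_mem hs hvs hs'
  obtain ⟨b, hb, hvb⟩ := neighbor_mem ht hvt ht'
  have hsv := (hv.connected_induce_diff_singleton hs hs').preconnected
  have htv := (hv.connected_induce_diff_singleton ht ht').preconnected
  rw [Set.union_sdiff_distrib]
  by_cases hab : a = b
  · exact induce_union_connected hsv htv ⟨a, ha, hab ▸ hb⟩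
  · exact connected_induce_union hsv htv ha hb (hv a b hva hvb hab)

end Simplicial

section CkEdge

variable {n : ℕ} {G : SimpleGraph (Fin n)} {v : Fin n}

lemma GraphSimplicial.clutterSimplicial_ckEdge (hv : GraphSimplicial G v) {k : ℕ} (hk : 2 ≤ k) :
    ClutterSimplicial (CkEdge G k) v := by
  rintro e f ⟨rfl, he⟩ ⟨hfe, hf⟩ hef hve hvf
  have diff_nonempty {r : Finset (Fin n)} (hr : 2 ≤ r.card) : ((r : Set (Fin n)) \ {v}).Nonempty :=
    (Finset.exists_mem_ne hr v).imp fun _ ⟨hx, hxv⟩ => ⟨hx, hxv⟩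
  have hconn := hv.connected_induce_union_diff_singleton he hf hve hvf (diff_nonempty hk)
    (diff_nonempty (hfe ▸ hk))
  have hcard : e.card ≤ ((e ∪ f).erase v).card := Finset.card_le_card_erase_union hve
    fun h => hef (Finset.eq_of_subset_of_card_le h hfe.ge).symm
  obtain ⟨g, hg, hgcard, hgconn⟩ := exists_connected_induce_subset_card
    (s := (e ∪ f).erase v) (by rwa [Finset.coe_erase, Finset.coe_union]) (by omega) hcard
  exact ⟨g, ⟨hgcard, hgconn⟩, hg⟩

lemma GraphSimplicial.of_clutterSimplicial_ckEdge_two (h : ClutterSimplicial (CkEdge G 2) v) :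
    GraphSimplicial G v := by
  intro u w hvu hvw huw
  have pair_edge {x : Fin n} (hvx : G.Adj v x) : CkEdge G 2 {v, x} :=
    ⟨Finset.card_pair hvx.ne, by rw [Finset.coe_pair]; exact induce_pair_connected_of_adj hvx⟩
  have hne : ({v, u} : Finset (Fin n)) ≠ {v, w} := fun h' => by
    have : u ∈ ({v, w} : Finset (Fin n)) := h' ▸ by simp
    simp [hvu.ne', huw] at this
  obtain ⟨g, ⟨hgcard, hgconn⟩, hg⟩ :=
    h _ _ (pair_edge hvu) (pair_edge hvw) hne (by simp) (by simp)
  have hguw : g = {u, w} := Finset.eq_of_subset_of_card_le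
    (hg.trans fun z hz => by
      simp only [Finset.mem_erase, Finset.mem_union, Finset.mem_insert,
        Finset.mem_singleton] at hz ⊢
      tauto) (by rw [hgcard, Finset.card_pair huw])
  subst hguw
  exact (connected_induce_pair_iff huw).1 (by rwa [Finset.coe_pair] at hgconn)

end CkEdge

/-- A vertex `v` of a finite simple graph `G` is simplicial if and only if it is a simplicial
vertex of the clutter `C_k(G)` for every `k` with `2 ≤ k ≤ |V(G)|`. -/
theorem graphSimplicial_iff_clutterSimplicial {n : ℕ} (G : SimpleGraph (Fin n)) (v : Fin n) :
    GraphSimplicial G v ↔ ∀ k : ℕ, 2 ≤ k → k ≤ n → ClutterSimplicial (CkEdge G k) v := by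
  refine ⟨fun hv k hk _ => hv.clutterSimplicial_ckEdge hk, fun h u w hvu hvw huw => ?_⟩
  have hn : 2 ≤ n := Fin.nontrivial_iff_two_le.1 ⟨u, w, huw⟩
  exact GraphSimplicial.of_clutterSimplicial_ckEdge_two (h 2 le_rfl hn) u w hvu hvw huw
end

section
/- The clutter C with vertex set {a,b,c,d,e} and edges {a,b,c} and {c,d,e} is not of the form C_3(G) for any graph G: there is no simple graph G on these vertices whose collection of 3-element connected induced subsets is exactly {{a,b,c}, {c,d,e}}. -/
/-!
In a connected induced subgraph on `{0, 1, 2}` the vertex `2` has a neighbour `x ∈ {0, 1}`, and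
likewise a neighbour `y ∈ {3, 4}` inside `{2, 3, 4}`. The path `x - 2 - y` makes `{x, 2, y}` a
connected 3-set that is neither of the two edges.
-/

namespace SimpleGraph

variable {V : Type*} {G : SimpleGraph V}

lemma exists_adj_of_connected_induce {s : Set V} (hs : (G.induce s).Connected) {v w : V}
    (hv : v ∈ s) (hw : w ∈ s) (hvw : v ≠ w) : ∃ u ∈ s, G.Adj v u := by
  have : Nontrivial s := ⟨⟨⟨v, hv⟩, ⟨w, hw⟩, fun h => hvw (congrArg Subtype.val h)⟩⟩
  obtain ⟨u, hu⟩ := hs.preconnected.exists_adj_of_nontrivial ⟨v, hv⟩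
  exact ⟨u, u.2, hu⟩

lemma connected_induce_of_adj_of_adj {u v w : V} (huv : G.Adj u v) (hvw : G.Adj v w) :
    (G.induce {u, v, w}).Connected := by
  have hunion : ({u, v} ∪ {v, w} : Set V) = {u, v, w} := by
    ext x
    simp only [Set.mem_union, Set.mem_insert_iff, Set.mem_singleton_iff]
    tauto
  rw [← hunion]
  exact induce_union_connected (induce_pair_connected_of_adj huv).preconnected
    (induce_pair_connected_of_adj hvw).preconnected ⟨v, by simp⟩

end SimpleGraph

open SimpleGraph in
/-- The clutter on `{a,b,c,d,e}` (here `0,1,2,3,4`) with edges `{a,b,c}` and `{c,d,e}` is not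
`C_3(G)` for any graph `G`: no simple graph has exactly these two 3-element connected induced
subsets. -/
theorem not_connected_graph_clutter :
    ¬ ∃ G : SimpleGraph (Fin 5),
      ∀ A : Finset (Fin 5),
        (A.card = 3 ∧ (G.induce (A : Set (Fin 5))).Connected) ↔
          (A = {0, 1, 2} ∨ A = {2, 3, 4}) := by
  rintro ⟨G, hG⟩
  have hleft := ((hG {0, 1, 2}).mpr (.inl rfl)).2
  have hright := ((hG {2, 3, 4}).mpr (.inr rfl)).2
  obtain ⟨x, hx, h2x⟩ :=
    exists_adj_of_connected_induce hleft (v := 2) (w := 0) (by simp) (by simp) (by decide)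
  obtain ⟨y, hy, h2y⟩ :=
    exists_adj_of_connected_induce hright (v := 2) (w := 3) (by simp) (by simp) (by decide)
  have hpath : (G.induce ({x, 2, y} : Finset (Fin 5))).Connected := by
    -- `rw`, not `simp`: the set also occurs in the vertex type of `G.induce`.
    rw [Finset.coe_insert, Finset.coe_insert, Finset.coe_singleton]
    exact connected_induce_of_adj_of_adj h2x.symm h2y
  have hx : x = 0 ∨ x = 1 := by
    simp only [Finset.mem_coe, Finset.mem_insert, Finset.mem_singleton] at hx
    have := h2x.ne'
    tauto
  have hy : y = 3 ∨ y = 4 := by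
    simp only [Finset.mem_coe, Finset.mem_insert, Finset.mem_singleton] at hy
    have := h2y.ne'
    tauto
  have hcard : ({x, 2, y} : Finset (Fin 5)).card = 3 := by
    rcases hx with rfl | rfl <;> rcases hy with rfl | rfl <;> decide
  have hmem := (hG _).mp ⟨hcard, hpath⟩
  rcases hx with rfl | rfl <;> rcases hy with rfl | rfl <;> revert hmem <;> decide
end

section
/- Let n ≥ k+1 ≥ 3. The maximum length l of a sequence of positive integers t_1,...,t_l (indices mod l, with t_{l+1} = t_1) satisfying 1 ≤ t_i ≤ k for all i, t_i + t_{i+1} ≥ k+1 for all i, and t_1 + ... + t_l = n, is ⌊2n/(k+1)⌋. -/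
/-!
Summing the `l` cyclic pair inequalities `t i + t (i + 1) ≥ k + 1` counts every `t i` twice, so
`l (k + 1) ≤ 2 n`. Conversely, for `l = ⌊2n/(k+1)⌋` the balanced sequence
`t i = ⌊(i+1) n / l⌋ - ⌊i n / l⌋` works: it sums to `n` by telescoping, is `l`-periodic (so the
wrap-around pair is an ordinary one), each term lies between `⌊n/l⌋` and `⌈n/l⌉`, and each pair of
consecutive terms is at least `⌊2n/l⌋ ≥ k + 1`.
-/

open Finset

def IsCyclicGapSeq (k n l : ℕ) (t : ℕ → ℕ) : Prop :=
  (∀ i < l, 1 ≤ t i ∧ t i ≤ k) ∧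
  (∀ i, i + 1 < l → k + 1 ≤ t i + t (i + 1)) ∧
  (0 < l → k + 1 ≤ t (l - 1) + t 0) ∧
  ∑ i ∈ range l, t i = n

theorem mul_le_two_mul_sum_of_cyclic_pair_le {t : ℕ → ℕ} {l c : ℕ}
    (hpair : ∀ i, i + 1 < l → c ≤ t i + t (i + 1)) (hwrap : 0 < l → c ≤ t (l - 1) + t 0) :
    l * c ≤ 2 * ∑ i ∈ range l, t i := by
  obtain _ | m := l
  · simp
  have hpairs : m * c ≤ ∑ i ∈ range m, (t i + t (i + 1)) := by
    simpa using card_nsmul_le_sum (range m) _ c fun i hi => hpair i (by simp at hi; omega)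
  have hwrap' : c ≤ t m + t 0 := hwrap m.succ_pos
  calc (m + 1) * c ≤ ∑ i ∈ range m, (t i + t (i + 1)) + (t m + t 0) := by linarith
    _ = (∑ i ∈ range m, t i + t m) + (∑ i ∈ range m, t (i + 1) + t 0) := by
      rw [sum_add_distrib]; ring
    _ = 2 * ∑ i ∈ range (m + 1), t i := by rw [← sum_range_succ, ← sum_range_succ']; ring

def balancedSeq (n l i : ℕ) : ℕ := (i + 1) * n / l - i * n / l

section balancedSeq

variable {n l k : ℕ}

theorem monotone_mul_div (n l : ℕ) : Monotone fun i => i * n / l :=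
  fun _ _ h => Nat.div_le_div_right (Nat.mul_le_mul_right n h)

theorem sum_range_balancedSeq (n l m : ℕ) : ∑ i ∈ range m, balancedSeq n l i = m * n / l := by
  simpa [balancedSeq] using sum_range_tsub (monotone_mul_div n l) m

theorem balancedSeq_add_period (hl : 0 < l) (i : ℕ) :
    balancedSeq n l (i + l) = balancedSeq n l i := by
  have h : ∀ j, (j + l) * n / l = j * n / l + n := fun j => by
    rw [add_mul, Nat.add_mul_div_left _ _ hl]
  simp only [balancedSeq, add_right_comm i l 1, h]
  omega

theorem div_le_balancedSeq (n l i : ℕ) : n / l ≤ balancedSeq n l i := by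
  have : i * n / l + n / l ≤ (i * n + n) / l := Nat.div_add_div_le_add_div
  rw [balancedSeq, add_one_mul]
  omega

theorem balancedSeq_le (hn : n ≤ k * l) (i : ℕ) : balancedSeq n l i ≤ k := by
  rcases l.eq_zero_or_pos with rfl | hl
  · simp [balancedSeq]
  have hlt : (i + 1) * n / l < i * n / l + k + 1 := by
    rw [Nat.div_lt_iff_lt_mul hl, add_one_mul]
    have := Nat.lt_div_mul_add (a := i * n) hl
    nlinarith
  rw [balancedSeq]
  omega

theorem div_le_balancedSeq_add_balancedSeq_succ (n l i : ℕ) :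
    2 * n / l ≤ balancedSeq n l i + balancedSeq n l (i + 1) := by
  have h : i * n / l + 2 * n / l ≤ (i * n + 2 * n) / l := Nat.div_add_div_le_add_div
  have hmono := monotone_mul_div n l (Nat.le_succ (i + 1))
  rw [show i * n + 2 * n = (i + 1 + 1) * n by ring] at h
  rw [balancedSeq, balancedSeq]
  omega

theorem isCyclicGapSeq_balancedSeq (hl : 0 < l) (hln : l ≤ n) (hnk : n ≤ k * l)
    (hpair : (k + 1) * l ≤ 2 * n) : IsCyclicGapSeq k n l (balancedSeq n l) := by
  have hpair' : ∀ i, k + 1 ≤ balancedSeq n l i + balancedSeq n l (i + 1) := fun i =>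
    ((Nat.le_div_iff_mul_le hl).2 hpair).trans (div_le_balancedSeq_add_balancedSeq_succ n l i)
  refine ⟨fun i _ => ⟨?_, balancedSeq_le hnk i⟩, fun i _ => hpair' i, fun _ => ?_, ?_⟩
  · exact ((Nat.one_le_div_iff hl).2 hln).trans (div_le_balancedSeq n l i)
  · simpa [Nat.sub_add_cancel hl, ← balancedSeq_add_period hl 0] using hpair' (l - 1)
  · rw [sum_range_balancedSeq, Nat.mul_div_cancel_left _ hl]

end balancedSeq

/-- For `n ≥ k+1 ≥ 3`, the maximum length `l` of a cyclic sequence of positive integers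
`t_1, …, t_l` with `1 ≤ t_i ≤ k`, `t_i + t_{i+1} ≥ k+1` (indices mod `l`) and
`t_1 + ⋯ + t_l = n` is `⌊2n/(k+1)⌋`. -/
theorem max_cyclic_gap_sequence (n k : ℕ) (hk : 2 ≤ k) (hn : k + 1 ≤ n) :
    IsGreatest
      {l : ℕ | ∃ t : ℕ → ℕ,
        (∀ i < l, 1 ≤ t i ∧ t i ≤ k) ∧
        (∀ i, i + 1 < l → k + 1 ≤ t i + t (i + 1)) ∧
        (0 < l → k + 1 ≤ t (l - 1) + t 0) ∧
        ∑ i ∈ Finset.range l, t i = n}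
      (2 * n / (k + 1)) := by
  refine ⟨?_, fun l ⟨t, _, hpair, hwrap, hsum⟩ => ?_⟩
  · set l := 2 * n / (k + 1)
    have hle : l * (k + 1) ≤ 2 * n := Nat.div_mul_le_self _ _
    have hlt : 2 * n < (k + 1) * (l + 1) := Nat.lt_mul_div_succ _ (by omega)
    have hl : 2 ≤ l := (Nat.le_div_iff_mul_le (by omega)).2 (by omega)
    -- `n ≤ k l` because `2 n ≤ l (k + 1) + k ≤ 2 k l` once `l, k ≥ 2`.
    exact ⟨balancedSeq n l, isCyclicGapSeq_balancedSeq (by omega) (by nlinarith) (by nlinarith)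
      (by linarith)⟩
  · rw [Nat.le_div_iff_mul_le (by omega), ← hsum]
    exact mul_le_two_mul_sum_of_cyclic_pair_le hpair hwrap
end

section
/- The minimum cardinality of a maximal independent set of the clutter C_k(Γ_n) of the n-cycle equals ⌈(k−1)n/(k+1)⌉, where C_k(Γ_n) is the clutter on the n vertices of the cycle Γ_n whose edges are the k-element subsets inducing a connected subgraph (i.e., k consecutive vertices), assuming 2 ≤ k and n ≥ k+1. -/
/-!
Let `U` be the complement of a maximal independent set `A`. Independence says that every window
of `k` consecutive vertices meets `U`; maximality says that every `u ∈ U` has a private window,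
one meeting `U` only in `u`. The private window of the middle one of three points of `U` cannot
avoid both others, so a window of `k + 1` vertices holds at most two points of `U`, and counting
incidences between `U` and the `n` windows of length `k + 1` gives `(k + 1) |U| ≤ 2 n`.
Conversely, for `q = ⌊2n/(k+1)⌋` the points `⌊i n / q⌋` are at most `k` apart while points two
steps apart are more than `k` apart, which gives each of them a private window.

Both conditions are read on the integers lying over `U`, where windows are intervals
`[c, c + k)`.
-/

/-- The edges of the clutter `C_k(Γ_n)` of the `n`-cycle: sets of `k` cyclically consecutive
vertices. -/
def CycleEdge (n k : ℕ) (A : Finset (ZMod n)) : Prop :=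
  ∃ a : ZMod n, A = (Finset.range k).image (fun j : ℕ => a + (j : ZMod n))

open Finset

theorem Finset.sum_card_filter_add_mem {G ι : Type*} [AddGroup G] [Fintype G] [DecidableEq G]
    (s : Finset G) (T : Finset ι) (f : ι → G) :
    ∑ a, #{t ∈ T | a + f t ∈ s} = #T * #s := by
  simp_rw [card_filter]
  rw [sum_comm, ← smul_eq_mul, ← sum_const]
  refine sum_congr rfl fun t _ => ?_
  rw [Fintype.sum_equiv (Equiv.addRight (f t)) (fun a => if a + f t ∈ s then 1 else 0)
    (fun a => if a ∈ s then 1 else 0) fun _ => rfl, sum_boole, Nat.cast_id, filter_mem_eq_inter,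
    univ_inter]

namespace CycleClutter

def IsIndep (n k : ℕ) (A : Finset (ZMod n)) : Prop :=
  ∀ e, CycleEdge n k e → ¬ e ⊆ A

def IsMaxIndep (n k : ℕ) (A : Finset (ZMod n)) : Prop :=
  IsIndep n k A ∧ ∀ B, IsIndep n k B → A ⊆ B → B = A

def IsWindowTransversal (k : ℕ) (S : Set ℤ) : Prop :=
  ∀ c : ℤ, ∃ x ∈ S, c ≤ x ∧ x < c + k

def HasPrivateWindows (k : ℕ) (S : Set ℤ) : Prop :=
  ∀ v ∈ S, ∃ c : ℤ, c ≤ v ∧ v < c + k ∧ ∀ x ∈ S, c ≤ x → x < c + k → x = v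

variable {n k : ℕ}

theorem isIndep_iff (A : Finset (ZMod n)) :
    IsIndep n k A ↔ IsWindowTransversal k {x : ℤ | (x : ZMod n) ∉ A} := by
  constructor
  · intro h c
    obtain ⟨_, hx, hxA⟩ := not_subset.1 (h _ ⟨c, rfl⟩)
    obtain ⟨j, hj, rfl⟩ := mem_image.1 hx
    exact ⟨c + j, by simpa using hxA, by omega, by have := mem_range.1 hj; omega⟩
  · rintro h e ⟨a, rfl⟩ hsub
    obtain ⟨c, rfl⟩ := ZMod.intCast_surjective a
    obtain ⟨x, hxA, hcx, hxc⟩ := h c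
    obtain ⟨j, rfl⟩ : ∃ j : ℕ, x = c + j := ⟨(x - c).toNat, by omega⟩
    exact hxA (by simpa using hsub (mem_image.2 ⟨j, mem_range.2 (by omega), rfl⟩))

theorem isMaxIndep_of_hasPrivateWindows {A : Finset (ZMod n)} (hA : IsIndep n k A)
    (hpriv : HasPrivateWindows k {x : ℤ | (x : ZMod n) ∉ A}) : IsMaxIndep n k A := by
  refine ⟨hA, fun B hB hAB => subset_antisymm (fun b hb => ?_) hAB⟩
  by_contra hbA
  obtain ⟨v, rfl⟩ := ZMod.intCast_surjective b
  obtain ⟨c, -, -, huniq⟩ := hpriv v hbA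
  obtain ⟨x, hxB, hcx, hxc⟩ := (isIndep_iff B).1 hB c
  obtain rfl := huniq x (fun hxA => hxB (hAB hxA)) hcx hxc
  exact hxB hb

theorem IsMaxIndep.hasPrivateWindows {A : Finset (ZMod n)} (hA : IsMaxIndep n k A)
    (hkn : k ≤ n) : HasPrivateWindows k {x : ℤ | (x : ZMod n) ∉ A} := by
  intro v (hv : (v : ZMod n) ∉ A)
  obtain ⟨c, hc⟩ :
      ∃ c : ℤ, ∀ x, c ≤ x → x < c + k → (x : ZMod n) ∈ insert (v : ZMod n) A := by
    by_contra! h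
    have := hA.2 _ ((isIndep_iff _).2 fun c => by
      obtain ⟨x, hcx, hxc, hx⟩ := h c
      exact ⟨x, hx, hcx, hxc⟩) (subset_insert _ _)
    exact hv (this ▸ mem_insert_self _ _)
  obtain ⟨x₀, hx₀A, hcx₀, hx₀c⟩ := (isIndep_iff A).1 hA.1 c
  have hx₀v : (x₀ : ZMod n) = v := (mem_insert.1 (hc x₀ hcx₀ hx₀c)).resolve_right hx₀A
  refine ⟨c + (v - x₀), by omega, by omega, fun y (hyA : (y : ZMod n) ∉ A) hcy hyc => ?_⟩
  -- the window at `c` is congruent modulo `n` to the one at `c + (v - x₀)`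
  have hyv : (y : ZMod n) = v := by
    have hy := hc (y - (v - x₀)) (by omega) (by omega)
    rw [show ((y - (v - x₀) : ℤ) : ZMod n) = y by push_cast; rw [hx₀v]; ring] at hy
    exact (mem_insert.1 hy).resolve_right hyA
  have hdvd := (ZMod.intCast_eq_intCast_iff_dvd_sub v y n).1 hyv.symm
  have := Int.eq_zero_of_abs_lt_dvd hdvd (abs_lt.2 ⟨by omega, by omega⟩)
  omega

theorem HasPrivateWindows.false_of_lt_of_lt {S : Set ℤ} (hS : HasPrivateWindows k S)
    {x y z : ℤ} (hx : x ∈ S) (hy : y ∈ S) (hz : z ∈ S) (hxy : x < y) (hyz : y < z)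
    (hzx : z ≤ x + k) : False := by
  obtain ⟨c, hcy, hyc, huniq⟩ := hS y hy
  rcases le_or_gt c x with hcx | hxc
  · exact hxy.ne (huniq x hx hcx (by omega))
  · exact hyz.ne' (huniq z hz (by omega) (by omega))

theorem IsMaxIndep.card_window_inter_compl_le_two [NeZero n] {A : Finset (ZMod n)}
    (hA : IsMaxIndep n k A) (hkn : k ≤ n) (a : ZMod n) :
    #{j ∈ range (k + 1) | a + ((j : ℕ) : ZMod n) ∈ Aᶜ} ≤ 2 := by
  set F := {j ∈ range (k + 1) | a + ((j : ℕ) : ZMod n) ∈ Aᶜ}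
  rcases F.eq_empty_or_nonempty with hF | hF
  · simp [hF]
  obtain ⟨c, rfl⟩ := ZMod.intCast_surjective a
  have hlift : ∀ j ∈ F, c + j ∈ {x : ℤ | (x : ZMod n) ∉ A} ∧ j ≤ k := fun j hj => by
    simp only [F, mem_filter, mem_range, mem_compl] at hj
    exact ⟨by simpa using hj.2, by omega⟩
  refine (card_le_card fun j hj => ?_).trans (card_le_two (a := F.min' hF) (b := F.max' hF))
  by_contra hne
  simp only [mem_insert, mem_singleton, not_or] at hne
  have hmin := hlift _ (F.min'_mem hF)
  have hmax := hlift _ (F.max'_mem hF)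
  exact (hA.hasPrivateWindows hkn).false_of_lt_of_lt hmin.1 (hlift j hj).1 hmax.1
    (by have := (F.min'_le j hj).lt_of_ne' hne.1; omega)
    (by have := (F.le_max' j hj).lt_of_ne hne.2; omega) (by omega)

theorem IsMaxIndep.card_compl_mul_le [NeZero n] {A : Finset (ZMod n)} (hA : IsMaxIndep n k A)
    (hkn : k ≤ n) : #Aᶜ * (k + 1) ≤ 2 * n :=
  calc #Aᶜ * (k + 1) = ∑ a, #{j ∈ range (k + 1) | a + ((j : ℕ) : ZMod n) ∈ Aᶜ} := by
        rw [sum_card_filter_add_mem, card_range, mul_comm]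
    _ ≤ ∑ _a : ZMod n, 2 := sum_le_sum fun a _ => hA.card_window_inter_compl_le_two hkn a
    _ = 2 * n := by simp [mul_comm]

section QuasiPeriodic

variable {u : ℤ → ℤ}

theorem strictMono_of_gaps (hgap : ∀ i, u (i + 1) ≤ u i + k)
    (hgap₂ : ∀ i, u i + k < u (i + 2)) : StrictMono u :=
  strictMono_int_of_lt_succ fun i => by
    have h₁ := hgap (i + 1)
    rw [add_assoc, one_add_one_eq_two] at h₁
    have := hgap₂ i
    omega

theorem isWindowTransversal_range (hu : StrictMono u) (hgap : ∀ i, u (i + 1) ≤ u i + k) :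
    IsWindowTransversal k (Set.range u) := by
  intro c
  suffices ∃ i, c ≤ u i ∧ u i < c + k by
    obtain ⟨i, h⟩ := this
    exact ⟨u i, ⟨i, rfl⟩, h⟩
  induction c using Int.inductionOn' (b := u 0) with
  | zero => exact ⟨0, le_rfl, (hu (lt_add_one 0)).trans_le (hgap 0)⟩
  | succ c _ ih =>
    obtain ⟨i, hci, hic⟩ := ih
    rcases hci.lt_or_eq with hci | hci
    · exact ⟨i, by omega, by omega⟩
    · exact ⟨i + 1, by have := hu (lt_add_one i); omega, by have := hgap i; omega⟩
  | pred c _ ih =>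
    obtain ⟨i, hci, hic⟩ := ih
    by_cases hic' : u i < c - 1 + k
    · exact ⟨i, by omega, hic'⟩
    · exact ⟨i - 1, by have := hgap (i - 1); rw [sub_add_cancel] at this; omega,
        by have := hu (sub_one_lt i); omega⟩

theorem hasPrivateWindows_range (hgap : ∀ i, u (i + 1) ≤ u i + k)
    (hgap₂ : ∀ i, u i + k < u (i + 2)) : HasPrivateWindows k (Set.range u) := by
  have hu := strictMono_of_gaps hgap hgap₂
  rintro _ ⟨i, rfl⟩
  have hprev := hgap (i - 1)
  have hnext := hgap₂ (i - 1)
  rw [sub_add_cancel] at hprev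
  rw [show i - 1 + 2 = i + 1 by ring] at hnext
  refine ⟨u (i - 1) + 1, by have := hu (sub_one_lt i); omega, by omega, ?_⟩
  rintro _ ⟨l, rfl⟩ hl hl'
  have h₁ : i - 1 < l := hu.lt_iff_lt.1 (by omega)
  have h₂ : l < i + 1 := hu.lt_iff_lt.1 (by omega)
  rw [show l = i by omega]

variable {q : ℕ}

theorem exists_eq_add_mul_of_intCast_eq (hper : ∀ i m, u (i + m * q) = u i + m * n)
    {i x : ℤ} (h : (u i : ZMod n) = x) :
    ∃ m, x = u (i + m * q) := by
  obtain ⟨m, hm⟩ := (ZMod.intCast_eq_intCast_iff_dvd_sub _ _ _).1 h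
  exact ⟨m, by rw [hper]; linarith⟩

theorem intCast_mem_image_iff (hper : ∀ i m, u (i + m * q) = u i + m * n) (hq : 0 < q)
    (x : ℤ) :
    (x : ZMod n) ∈ (Ico 0 (q : ℤ)).image (fun i => (u i : ZMod n)) ↔ x ∈ Set.range u := by
  constructor
  · rintro hx
    obtain ⟨i, -, hi⟩ := mem_image.1 hx
    obtain ⟨m, rfl⟩ := exists_eq_add_mul_of_intCast_eq hper hi
    exact ⟨_, rfl⟩
  · rintro ⟨l, rfl⟩
    refine mem_image.2 ⟨l % q, mem_Ico.2 ⟨Int.emod_nonneg _ (by omega),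
      Int.emod_lt_of_pos _ (by omega)⟩, ?_⟩
    rw [← Int.emod_add_ediv_mul l q, hper]
    simp

theorem card_image_intCast (hper : ∀ i m, u (i + m * q) = u i + m * n) (hu : StrictMono u) :
    #((Ico 0 (q : ℤ)).image (fun i => (u i : ZMod n))) = q := by
  rw [card_image_of_injOn, Int.card_Ico, sub_zero, Int.toNat_natCast]
  intro i hi j hj hij
  simp only [coe_Ico, Set.mem_Ico] at hi hj
  obtain ⟨m, hm⟩ := exists_eq_add_mul_of_intCast_eq hper hij
  have := congrArg (· % (q : ℤ)) (hu.injective hm)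
  simp only [Int.add_mul_emod_self_right, Int.emod_eq_of_lt hi.1 hi.2,
    Int.emod_eq_of_lt hj.1 hj.2] at this
  exact this.symm

end QuasiPeriodic

theorem exists_isMaxIndep_card_compl [NeZero n] {q : ℕ} (hq : 0 < q) (hnq : n ≤ k * q)
    (hqn : (k + 1) * q ≤ 2 * n) : ∃ A : Finset (ZMod n), IsMaxIndep n k A ∧ #Aᶜ = q := by
  set u : ℤ → ℤ := fun i => i * n / q
  have hq' : (q : ℤ) ≠ 0 := by omega
  have hnq' : (n : ℤ) ≤ k * q := by exact_mod_cast hnq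
  have hqn' : ((k : ℤ) + 1) * q ≤ 2 * n := by exact_mod_cast hqn
  have hper : ∀ i m, u (i + m * q) = u i + m * n := fun i m => by
    simp only [u, add_mul, mul_right_comm (m : ℤ), Int.add_mul_ediv_right _ _ hq']
  have hgap : ∀ i, u (i + 1) ≤ u i + k := fun i =>
    calc (i + 1) * n / q = (i * n + n) / q := by ring_nf
      _ ≤ (i * n + k * q) / q := Int.ediv_le_ediv (by omega) (by linarith)
      _ = i * n / q + k := Int.add_mul_ediv_right _ _ hq'
  have hgap₂ : ∀ i, u i + k < u (i + 2) := fun i =>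
    calc i * n / q + k < (i * n + (k + 1) * q) / q := by
          rw [Int.add_mul_ediv_right _ _ hq']; omega
      _ ≤ (i + 2) * n / q := Int.ediv_le_ediv (by omega) (by linarith)
  set U := (Ico 0 (q : ℤ)).image fun i => (u i : ZMod n)
  have hU : {x : ℤ | (x : ZMod n) ∉ Uᶜ} = Set.range u := by
    ext x
    simpa only [Set.mem_ofPred_eq, mem_compl, not_not] using intCast_mem_image_iff hper hq x
  refine ⟨Uᶜ, isMaxIndep_of_hasPrivateWindows ?_ ?_, ?_⟩
  · rw [isIndep_iff, hU]
    exact isWindowTransversal_range (strictMono_of_gaps hgap hgap₂) hgap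
  · rw [hU]
    exact hasPrivateWindows_range hgap hgap₂
  · rw [compl_compl]
    exact card_image_intCast hper (strictMono_of_gaps hgap hgap₂)

end CycleClutter

theorem le_mul_two_mul_div {n k : ℕ} (hk : 2 ≤ k) (hn : k + 1 ≤ n) :
    n ≤ k * (2 * n / (k + 1)) := by
  have hlt := Nat.lt_mul_div_succ (2 * n) (show 0 < k + 1 by omega)
  have hq : 2 ≤ 2 * n / (k + 1) := (Nat.le_div_iff_mul_le (by omega)).2 (by omega)
  nlinarith

theorem sub_two_mul_div_eq {n k : ℕ} (hk : 1 ≤ k) :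
    n - 2 * n / (k + 1) = ((k - 1) * n + k) / (k + 1) := by
  have hdiv := Nat.div_add_mod (2 * n) (k + 1)
  have hmod := Nat.mod_lt (2 * n) (show 0 < k + 1 by omega)
  have hqn : 2 * n / (k + 1) ≤ n := by
    rw [Nat.div_le_iff_le_mul_add_pred (by omega)]; nlinarith
  generalize 2 * n / (k + 1) = q at *
  generalize 2 * n % (k + 1) = r at *
  symm
  apply Nat.div_eq_of_lt_le
  · zify [hk, hqn] at *; nlinarith
  · zify [hk, hqn] at *; nlinarith

/-- For `2 ≤ k` and `n ≥ k+1`, the minimum cardinality of a maximal independent set of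
`C_k(Γ_n)` equals `⌈(k-1)n/(k+1)⌉`. -/
theorem minMaxIndep_cycle (n k : ℕ) (hk : 2 ≤ k) (hn : k + 1 ≤ n) :
    sInf {m : ℕ | ∃ A : Finset (ZMod n),
        (∀ e, CycleEdge n k e → ¬ e ⊆ A) ∧
        (∀ B : Finset (ZMod n), (∀ e, CycleEdge n k e → ¬ e ⊆ B) → A ⊆ B → B = A) ∧
        A.card = m} =
      ((k - 1) * n + k) / (k + 1) := by
  have : NeZero n := ⟨by omega⟩
  have hcard : ∀ A : Finset (ZMod n), #A = n - #Aᶜ := fun A => by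
    rw [card_compl, ZMod.card, Nat.sub_sub_self (by simpa using card_le_univ A)]
  obtain ⟨A, hA, hAc⟩ := CycleClutter.exists_isMaxIndep_card_compl (k := k) (n := n)
    ((Nat.le_div_iff_mul_le (by omega)).2 (by omega)) (le_mul_two_mul_div hk hn)
    (Nat.mul_div_le _ _)
  rw [← sub_two_mul_div_eq (by omega)]
  refine le_antisymm (Nat.sInf_le ⟨A, hA.1, hA.2, by rw [hcard, hAc]⟩)
    (le_csInf ⟨_, A, hA.1, hA.2, rfl⟩ ?_)
  rintro _ ⟨B, hB, hBmax, rfl⟩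
  have := (Nat.le_div_iff_mul_le (by omega)).2
    (CycleClutter.IsMaxIndep.card_compl_mul_le ⟨hB, hBmax⟩ (by omega))
  rw [hcard]
  omega
end

section
/- For the clutter C_k(Γ_n) of the n-cycle (edges are sets of k cyclically consecutive vertices, 2 ≤ k ≤ n), the edgewise domination number ε satisfies ε(C_k(Γ_n)) = ⌈n/(3k−2)⌉. -/
/-- A vertex is isolated in a clutter if it lies in no edge. -/
def IsIsolated {V : Type} (Ed : Finset V → Prop) (v : V) : Prop := ∀ e, Ed e → v ∉ e

/-- A set `F` of edges of the clutter with edge predicate `Ed` is edgewise dominant if every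
non-isolated vertex that lies in no edge of `F` and in no trivial edge has a neighbor
contained in some edge of `F`. -/
def EdgewiseDominant {V : Type} (Ed : Finset V → Prop) (F : Finset (Finset V)) : Prop :=
  (∀ f ∈ F, Ed f) ∧
    ∀ v : V, ¬ IsIsolated Ed v → (∀ f ∈ F, v ∉ f) → (∀ e, Ed e → v ∈ e → e.card ≠ 1) →
      ∃ w : V, (∃ e, Ed e ∧ v ∈ e ∧ w ∈ e) ∧ ∃ f ∈ F, w ∈ f

/-- `ε(C)`: the minimum cardinality of an edgewise dominant set of edges. -/
noncomputable def epsilonDom {V : Type} (Ed : Finset V → Prop) : ℕ :=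
  sInf {m : ℕ | ∃ F : Finset (Finset V), EdgewiseDominant Ed F ∧ F.card = m}

/-!
The vertices dominated by an edge `f` (those sharing an edge with a vertex of `f`) form its
edge neighbourhood; a set of edges is edgewise dominant when these neighbourhoods cover every
vertex, and only if they cover every non-isolated vertex lying in no singleton edge. On the
`n`-cycle the edge neighbourhood of the arc `[b, b + k)` is the arc `[b - (k - 1), b + 2k - 1)`
of `3k - 2` vertices. Hence `n ≤ |F| (3k - 2)` for every edgewise dominant `F`, and the
`⌈n / (3k - 2)⌉` arcs starting at `i (3k - 2) + k - 1` are edgewise dominant since their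
neighbourhoods tile the cycle.
-/

section Clutter

variable {V : Type} {Ed : Finset V → Prop} {F : Finset (Finset V)}

def edgeNbhd (Ed : Finset V → Prop) (f : Finset V) : Set V :=
  {v | ∃ w ∈ f, ∃ e, Ed e ∧ v ∈ e ∧ w ∈ e}

theorem edgewiseDominant_of_forall_mem_edgeNbhd (hEd : ∀ f ∈ F, Ed f)
    (hcover : ∀ v, ∃ f ∈ F, v ∈ edgeNbhd Ed f) : EdgewiseDominant Ed F := by
  refine ⟨hEd, fun v _ _ _ => ?_⟩
  obtain ⟨f, hf, w, hwf, e, he, hve, hwe⟩ := hcover v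
  exact ⟨w, ⟨e, he, hve, hwe⟩, f, hf, hwf⟩

theorem EdgewiseDominant.exists_mem_edgeNbhd (hF : EdgewiseDominant Ed F) {v : V}
    (hv : ¬IsIsolated Ed v) (hv₁ : ∀ e, Ed e → v ∈ e → e.card ≠ 1) :
    ∃ f ∈ F, v ∈ edgeNbhd Ed f := by
  by_cases hvF : ∃ f ∈ F, v ∈ f
  · obtain ⟨f, hf, hvf⟩ := hvF
    exact ⟨f, hf, v, hvf, f, hF.1 f hf, hvf, hvf⟩
  · push Not at hvF
    obtain ⟨w, ⟨e, he, hve, hwe⟩, f, hf, hwf⟩ := hF.2 v hv hvF hv₁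
    exact ⟨f, hf, w, hwf, e, he, hve, hwe⟩

theorem EdgewiseDominant.natCard_le_card_mul [Finite V] (hF : EdgewiseDominant Ed F) {d : ℕ}
    (hV : ∀ v, ¬IsIsolated Ed v ∧ ∀ e, Ed e → v ∈ e → e.card ≠ 1)
    (hd : ∀ f ∈ F, (edgeNbhd Ed f).ncard ≤ d) : Nat.card V ≤ F.card * d := by
  have hcover : Set.univ ⊆ ⋃ f ∈ F, edgeNbhd Ed f := fun v _ => by
    obtain ⟨f, hf, hvf⟩ := hF.exists_mem_edgeNbhd (hV v).1 (hV v).2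
    exact Set.mem_biUnion hf hvf
  calc Nat.card V = (Set.univ : Set V).ncard := (Set.ncard_univ V).symm
    _ ≤ (⋃ f ∈ F, edgeNbhd Ed f).ncard := Set.ncard_le_ncard hcover
    _ ≤ ∑ f ∈ F, (edgeNbhd Ed f).ncard := F.set_ncard_biUnion_le _
    _ ≤ F.card * d := Finset.sum_le_card_nsmul F _ d hd

theorem epsilonDom_eq {m : ℕ} (hle : ∃ F, EdgewiseDominant Ed F ∧ F.card ≤ m)
    (hge : ∀ F, EdgewiseDominant Ed F → m ≤ F.card) : epsilonDom Ed = m := by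
  obtain ⟨F₀, hF₀, hF₀m⟩ := hle
  have hne : {m | ∃ F, EdgewiseDominant Ed F ∧ F.card = m}.Nonempty := ⟨_, F₀, hF₀, rfl⟩
  refine le_antisymm (le_trans (Nat.sInf_le ⟨F₀, hF₀, rfl⟩) hF₀m) ?_
  obtain ⟨F, hF, hFcard⟩ := Nat.sInf_mem hne
  rw [epsilonDom, ← hFcard]
  exact hge F hF

end Clutter

namespace ZMod

variable {n : ℕ}

def arc (n m : ℕ) (a : ZMod n) : Finset (ZMod n) :=
  (Finset.range m).image fun j : ℕ => a + (j : ZMod n)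

theorem mem_arc {m : ℕ} {a v : ZMod n} : v ∈ arc n m a ↔ ∃ j < m, v = a + j := by
  simp only [arc, Finset.mem_image, Finset.mem_range, eq_comm]

theorem cycleEdge_iff {k : ℕ} {e : Finset (ZMod n)} : CycleEdge n k e ↔ ∃ a, e = arc n k a :=
  Iff.rfl

theorem cycleEdge_arc {k : ℕ} (a : ZMod n) : CycleEdge n k (arc n k a) := ⟨a, rfl⟩

theorem self_mem_arc {m : ℕ} (hm : 1 ≤ m) (a : ZMod n) : a ∈ arc n m a :=
  mem_arc.2 ⟨0, hm, by simp⟩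

theorem card_arc_le (m : ℕ) (a : ZMod n) : (arc n m a).card ≤ m :=
  Finset.card_image_le.trans (Finset.card_range m).le

theorem card_arc [NeZero n] {m : ℕ} (hm : m ≤ n) (a : ZMod n) : (arc n m a).card = m := by
  rw [arc, Finset.card_image_of_injOn, Finset.card_range]
  intro i hi j hj hij
  simp only [Finset.coe_range, Set.mem_Iio] at hi hj
  have hval := congrArg ZMod.val (add_left_cancel hij)
  rwa [ZMod.val_cast_of_lt (by omega), ZMod.val_cast_of_lt (by omega)] at hval

theorem mem_arc_of_mem_arc_of_mem_arc {k l : ℕ} {a b v w : ZMod n}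
    (hv : v ∈ arc n k a) (hw : w ∈ arc n k a) (hwb : w ∈ arc n l b) :
    v ∈ arc n (l + 2 * (k - 1)) (b - (k - 1 : ℕ)) := by
  obtain ⟨i, hi, rfl⟩ := mem_arc.1 hv
  obtain ⟨j, hj, rfl⟩ := mem_arc.1 hw
  obtain ⟨t, ht, hab⟩ := mem_arc.1 hwb
  refine mem_arc.2 ⟨t + i + (k - 1 - j), by omega, ?_⟩
  push_cast [Nat.cast_sub (show j ≤ k - 1 by omega)]
  linear_combination hab

theorem arc_subset_edgeNbhd_arc {k l : ℕ} (hk : 1 ≤ k) (hl : 1 ≤ l) (b : ZMod n) :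
    (arc n (l + 2 * (k - 1)) (b - (k - 1 : ℕ)) : Set (ZMod n)) ⊆
      edgeNbhd (CycleEdge n k) (arc n l b) := by
  intro v hv
  obtain ⟨t, ht, rfl⟩ := mem_arc.1 hv
  -- the vertex of the arc at `b` nearest to `v` sits at offset `s + (k - 1)` from `b - (k - 1)`
  set s := min (t - (k - 1)) (l - 1)
  set c := b - (k - 1 : ℕ)
  refine ⟨c + (s + (k - 1) : ℕ), mem_arc.2 ⟨s, by omega, ?_⟩,
    arc n k (c + (min t (s + (k - 1)) : ℕ)), cycleEdge_arc _,
    mem_arc.2 ⟨t - min t (s + (k - 1)), by omega, ?_⟩,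
    mem_arc.2 ⟨s + (k - 1) - min t (s + (k - 1)), by omega, ?_⟩⟩
  · push_cast [c]; ring
  all_goals rw [add_assoc, ← Nat.cast_add]; congr 2; omega

theorem edgeNbhd_arc {k l : ℕ} (hk : 1 ≤ k) (hl : 1 ≤ l) (b : ZMod n) :
    edgeNbhd (CycleEdge n k) (arc n l b) = arc n (l + 2 * (k - 1)) (b - (k - 1 : ℕ)) := by
  refine subset_antisymm ?_ (arc_subset_edgeNbhd_arc hk hl b)
  rintro v ⟨w, hwb, e, ⟨a, rfl⟩, hve, hwe⟩
  exact mem_arc_of_mem_arc_of_mem_arc hve hwe hwb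

theorem exists_lt_mem_arc_mul [NeZero n] {m d : ℕ} (hn : n ≤ m * d) (v : ZMod n) :
    ∃ i < m, v ∈ arc n d (i * d : ℕ) := by
  have hd : 0 < d := Nat.pos_of_ne_zero fun h => by simp [h, NeZero.ne n] at hn
  refine ⟨v.val / d, (Nat.div_lt_iff_lt_mul hd).2 (v.val_lt.trans_le hn),
    mem_arc.2 ⟨v.val % d, Nat.mod_lt _ hd, ?_⟩⟩
  rw [← Nat.cast_add, Nat.div_add_mod', ZMod.natCast_zmod_val]

end ZMod

open ZMod

theorem EdgewiseDominant.le_card_mul_cycleEdge {n k : ℕ} (hk : 2 ≤ k) (hn : k ≤ n)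
    {F : Finset (Finset (ZMod n))} (hF : EdgewiseDominant (CycleEdge n k) F) :
    n ≤ F.card * (3 * k - 2) := by
  have : NeZero n := ⟨by omega⟩
  have hV : ∀ v, ¬IsIsolated (CycleEdge n k) v ∧
      ∀ e, CycleEdge n k e → v ∈ e → e.card ≠ 1 := fun v =>
    ⟨fun h => h _ (cycleEdge_arc v) (self_mem_arc (by omega) v),
      by rintro e ⟨a, rfl⟩ -; exact (card_arc hn a).trans_ne (by omega)⟩
  have hd : ∀ f ∈ F, (edgeNbhd (CycleEdge n k) f).ncard ≤ 3 * k - 2 := by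
    intro f hf
    obtain ⟨b, rfl⟩ := cycleEdge_iff.1 (hF.1 f hf)
    rw [edgeNbhd_arc (by omega) (by omega), Set.ncard_coe_finset]
    exact (card_arc_le _ _).trans (by omega)
  simpa using hF.natCard_le_card_mul hV hd

theorem exists_edgewiseDominant_cycleEdge_card_le {n k m : ℕ} [NeZero n] (hk : 1 ≤ k)
    (hm : n ≤ m * (3 * k - 2)) :
    ∃ F, EdgewiseDominant (CycleEdge n k) F ∧ F.card ≤ m := by
  set d := 3 * k - 2
  refine ⟨(Finset.range m).image fun i => arc n k ((i * d + (k - 1) : ℕ) : ZMod n),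
    edgewiseDominant_of_forall_mem_edgeNbhd ?_ fun v => ?_,
    Finset.card_image_le.trans (Finset.card_range m).le⟩
  · simp only [Finset.mem_image]
    rintro f ⟨i, -, rfl⟩
    exact cycleEdge_arc _
  · obtain ⟨i, hi, hv⟩ := exists_lt_mem_arc_mul hm v
    refine ⟨_, Finset.mem_image_of_mem _ (Finset.mem_range.2 hi), ?_⟩
    rw [edgeNbhd_arc hk hk, Nat.cast_add, add_sub_cancel_right,
      show k + 2 * (k - 1) = d by omega]
    exact hv

/-- For `2 ≤ k ≤ n`, the edgewise domination number of the clutter `C_k(Γ_n)` of the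
`n`-cycle equals `⌈n/(3k-2)⌉`. -/
theorem epsilonDom_cycle (n k : ℕ) (hk : 2 ≤ k) (hn : k ≤ n) :
    epsilonDom (CycleEdge n k) = (n + (3 * k - 2) - 1) / (3 * k - 2) := by
  have : NeZero n := ⟨by omega⟩
  have hd : 0 < 3 * k - 2 := by omega
  rw [← Nat.ceilDiv_eq_add_pred_div]
  refine epsilonDom_eq ?_ fun F hF => ?_
  · refine exists_edgewiseDominant_cycleEdge_card_le (by omega) ?_
    simpa [mul_comm] using le_smul_ceilDiv (b := n) hd
  · rw [ceilDiv_le_iff_le_mul hd, mul_comm]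
    exact hF.le_card_mul_cycleEdge hk hn
end

section
/- For the clutter C_k(P_n) of the path on n vertices (edges are sets of k consecutive vertices, 2 ≤ k ≤ n), the edgewise domination number equals ⌈n/(3k−2)⌉. -/
/-- The edges of the clutter `C_k(P_n)` of the path on vertices `0, …, n-1`: sets of `k`
consecutive vertices. -/
def PathEdge (n k : ℕ) (A : Finset ℕ) : Prop :=
  ∃ a : ℕ, a + k ≤ n ∧ A = (Finset.range k).image (fun j => a + j)

/-!
A vertex of `C_k(P_n)` shares an edge with a vertex of the edge `f` exactly when it lies within
distance `k - 1` of `f`, so the vertices dominated by `f` form an interval of at most `3k - 2`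
vertices; hence at least `⌈n / (3k - 2)⌉` edges are needed. Conversely, cutting the path into
blocks of `3k - 2` consecutive vertices and taking the middle `k` vertices of each block gives an
edgewise dominant set of that size.
-/

open Finset

lemma epsilonDom_eq_of_forall_le_of_exists {V : Type} {Ed : Finset V → Prop} {m : ℕ}
    (hle : ∀ F, EdgewiseDominant Ed F → m ≤ F.card)
    (hex : ∃ F, EdgewiseDominant Ed F ∧ F.card ≤ m) :
    epsilonDom Ed = m := by
  obtain ⟨F, hF, hFm⟩ := hex
  have hF' : F.card ∈ {m | ∃ G : Finset (Finset V), EdgewiseDominant Ed G ∧ G.card = m} :=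
    ⟨F, hF, rfl⟩
  refine le_antisymm ((Nat.sInf_le hF').trans hFm) (le_csInf ⟨_, hF'⟩ ?_)
  rintro _ ⟨G, hG, rfl⟩
  exact hle G hG

section PathClutter

variable {n k : ℕ}

lemma pathEdge_iff {A : Finset ℕ} : PathEdge n k A ↔ ∃ a, a + k ≤ n ∧ A = Ico a (a + k) := by
  simp only [PathEdge, range_eq_Ico, image_add_left_Ico, add_zero]

lemma pathEdge_Ico {a : ℕ} (h : a + k ≤ n) : PathEdge n k (Ico a (a + k)) :=
  pathEdge_iff.2 ⟨a, h, rfl⟩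

lemma card_eq_of_pathEdge {A : Finset ℕ} (h : PathEdge n k A) : A.card = k := by
  obtain ⟨a, -, rfl⟩ := pathEdge_iff.1 h
  simp

lemma exists_pathEdge_mem_mem_iff {v w : ℕ} (hk : 0 < k) (hkn : k ≤ n) :
    (∃ e, PathEdge n k e ∧ v ∈ e ∧ w ∈ e) ↔
      v < n ∧ w < n ∧ v ≤ w + (k - 1) ∧ w ≤ v + (k - 1) := by
  constructor
  · rintro ⟨e, he, hv, hw⟩
    obtain ⟨a, ha, rfl⟩ := pathEdge_iff.1 he
    rw [mem_Ico] at hv hw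
    omega
  · rintro ⟨hv, hw, hvw, hwv⟩
    exact ⟨Ico (min (min v w) (n - k)) (min (min v w) (n - k) + k), pathEdge_Ico (by omega),
      mem_Ico.2 ⟨by omega, by omega⟩, mem_Ico.2 ⟨by omega, by omega⟩⟩

lemma not_isIsolated_pathEdge_iff {v : ℕ} (hk : 0 < k) (hkn : k ≤ n) :
    ¬ IsIsolated (PathEdge n k) v ↔ v < n := by
  have h := exists_pathEdge_mem_mem_iff (v := v) (w := v) hk hkn
  simp only [and_self] at h
  simp only [IsIsolated, not_forall, not_not, exists_prop, h]
  omega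

def pathNbhd (k : ℕ) (f : Finset ℕ) : Finset ℕ :=
  f.biUnion fun w => Ico (w - (k - 1)) (w + k)

lemma card_pathNbhd_Ico_le (b : ℕ) : (pathNbhd k (Ico b (b + k))).card ≤ 3 * k - 2 := by
  calc (pathNbhd k (Ico b (b + k))).card ≤ (Ico (b - (k - 1)) (b + (2 * k - 1))).card := by
        refine card_le_card fun x hx => ?_
        simp only [pathNbhd, mem_biUnion, mem_Ico] at hx ⊢
        omega
    _ ≤ 3 * k - 2 := by
        rw [Nat.card_Ico]
        omega

lemma range_subset_biUnion_pathNbhd {F : Finset (Finset ℕ)} (hk : 2 ≤ k) (hkn : k ≤ n)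
    (hF : EdgewiseDominant (PathEdge n k) F) : range n ⊆ F.biUnion (pathNbhd k) := by
  intro v hv
  rw [mem_range] at hv
  simp only [mem_biUnion, pathNbhd, mem_Ico]
  by_cases hvF : ∃ f ∈ F, v ∈ f
  · obtain ⟨f, hf, hvf⟩ := hvF
    exact ⟨f, hf, v, hvf, by omega⟩
  · push Not at hvF
    obtain ⟨w, hvw, f, hf, hwf⟩ := hF.2 v ((not_isIsolated_pathEdge_iff (by omega) hkn).2 hv)
      hvF fun e he _ => by rw [card_eq_of_pathEdge he]; omega
    rw [exists_pathEdge_mem_mem_iff (by omega) hkn] at hvw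
    exact ⟨f, hf, w, hwf, by omega⟩

lemma le_mul_card_of_edgewiseDominant {F : Finset (Finset ℕ)} (hk : 2 ≤ k) (hkn : k ≤ n)
    (hF : EdgewiseDominant (PathEdge n k) F) : n ≤ (3 * k - 2) * F.card :=
  calc n = (range n).card := (card_range n).symm
    _ ≤ (F.biUnion (pathNbhd k)).card := card_le_card (range_subset_biUnion_pathNbhd hk hkn hF)
    _ ≤ F.card * (3 * k - 2) := card_biUnion_le_card_mul _ _ _ fun f hf => by
        obtain ⟨b, -, rfl⟩ := pathEdge_iff.1 (hF.1 f hf)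
        exact card_pathNbhd_Ico_le b
    _ = (3 * k - 2) * F.card := mul_comm _ _

/-- Start of the middle `k` vertices of the `i`-th block of `3k - 2` vertices, shifted left
so that the last edge stays inside the path. -/
def coverStart (n k i : ℕ) : ℕ := min ((3 * k - 2) * i + (k - 1)) (n - k)

def pathCover (n k q : ℕ) : Finset (Finset ℕ) :=
  (range q).image fun i => Ico (coverStart n k i) (coverStart n k i + k)

lemma card_pathCover_le (q : ℕ) : (pathCover n k q).card ≤ q :=
  card_image_le.trans (card_range q).le

lemma edgewiseDominant_pathCover {q : ℕ} (hk : 0 < k) (hkn : k ≤ n) (hq : n ≤ (3 * k - 2) * q) :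
    EdgewiseDominant (PathEdge n k) (pathCover n k q) := by
  refine ⟨?_, fun v hv _ _ => ?_⟩
  · simp only [pathCover, mem_image]
    rintro _ ⟨i, -, rfl⟩
    exact pathEdge_Ico (by unfold coverStart; omega)
  rw [not_isIsolated_pathEdge_iff hk hkn] at hv
  set s := 3 * k - 2
  have hs : 0 < s := by omega
  have hi : v / s < q := (Nat.div_lt_iff_lt_mul hs).2 (by rw [mul_comm]; omega)
  have hblock : s * (v / s) ≤ v ∧ v < s * (v / s) + s :=
    ⟨Nat.mul_div_le v s, by have := Nat.div_add_mod v s; have := Nat.mod_lt v hs; omega⟩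
  generalize v / s = i at hi hblock
  have ha : coverStart n k i = min (s * i + (k - 1)) (n - k) := rfl
  set a := coverStart n k i
  refine ⟨max a (min v (a + (k - 1))),
    (exists_pathEdge_mem_mem_iff hk hkn).2 ⟨hv, by omega, by omega, by omega⟩,
    _, mem_image_of_mem _ (mem_range.2 hi), mem_Ico.2 ⟨by omega, by omega⟩⟩

end PathClutter

/-- For `2 ≤ k ≤ n`, the edgewise domination number of the clutter `C_k(P_n)` of the path on
`n` vertices equals `⌈n/(3k-2)⌉`. -/
theorem epsilonDom_path (n k : ℕ) (hk : 2 ≤ k) (hn : k ≤ n) :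
    epsilonDom (PathEdge n k) = (n + (3 * k - 2) - 1) / (3 * k - 2) := by
  have hceil : ∀ c, (n + (3 * k - 2) - 1) / (3 * k - 2) ≤ c ↔ n ≤ (3 * k - 2) * c := fun c => by
    rw [← Nat.ceilDiv_eq_add_pred_div]
    exact ceilDiv_le_iff_le_mul (by omega)
  apply epsilonDom_eq_of_forall_le_of_exists
  · exact fun F hF => (hceil _).2 (le_mul_card_of_edgewiseDominant hk hn hF)
  · exact ⟨_, edgewiseDominant_pathCover (by omega) hn ((hceil _).1 le_rfl), card_pathCover_le _⟩
end
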